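/- arXiv:2007.09531 — 2 statements merged into one kernel-verified Lean document; each statement's English description precedes it below -/
import Mathlib

section
/- For every real parameter M ≥ 1, the modified double-well potential F_M is nonnegative on ℝ, and the function x ↦ √(F_M(x)) is Lipschitz continuous on ℝ with Lipschitz constant 2M, i.e. |√(F_M(x)) − √(F_M(y))| ≤ 2M·|x − y| for all x, y ∈ ℝ. -/
/-!
On `|x| ≤ M` we have `√F_M(x) = |1 - x²| / 2`, which is `M`-Lipschitz there because
`|x² - y²| = |x - y| |x + y|`. On `x ≥ M` the potential is a quadratic `q` with `q'² ≤ 16 M² q`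
and `q'' = 3M² - 1 ≤ 8M²`, so Taylor's formula gives `q(y) ≤ (√q(x) + 2M |y - x|)²`.
The two pieces glue at `M`, and `F_M` is even.
-/

open Set NNReal

/-- The modified double-well potential `F_M` with cut-off parameter `M`:
the antiderivative of the modified nonlinearity `f_M`, normalized by `F_M(0) = 1/4`. -/
noncomputable def FM (M x : ℝ) : ℝ :=
  if |x| ≤ M then (1 - x ^ 2) ^ 2 / 4
  else (1 - M ^ 2) ^ 2 / 4 + (3 * M ^ 2 - 1) * (x ^ 2 - M ^ 2) / 2 - 2 * M ^ 3 * (|x| - M)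

theorem Real.sqrt_le_sqrt_add_mul_abs {u v d h L : ℝ} (hL : 0 ≤ L) (hv : 0 ≤ v)
    (hd : d ^ 2 ≤ 4 * L ^ 2 * v) (hu : u ≤ v + d * h + L ^ 2 * h ^ 2) : √u ≤ √v + L * |h| := by
  have hdh : d * h ≤ 2 * L * √v * |h| := by
    refine (le_abs_self _).trans (abs_le_of_sq_le_sq ?_ (by positivity))
    rw [mul_pow, mul_pow, mul_pow, mul_pow, Real.sq_sqrt hv, sq_abs]
    nlinarith [sq_nonneg h]
  rw [Real.sqrt_le_left (by positivity)]
  nlinarith [Real.sq_sqrt hv, sq_abs h]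

theorem LipschitzOnWith.sqrt_of_le_taylor {g g' : ℝ → ℝ} {s : Set ℝ} {L : ℝ≥0}
    (hg : ∀ x ∈ s, 0 ≤ g x) (hg' : ∀ x ∈ s, g' x ^ 2 ≤ 4 * L ^ 2 * g x)
    (htaylor : ∀ x ∈ s, ∀ y ∈ s, g y ≤ g x + g' x * (y - x) + L ^ 2 * (y - x) ^ 2) :
    LipschitzOnWith L (fun x ↦ √(g x)) s :=
  LipschitzOnWith.of_le_add_mul L fun y hy x hx ↦ by
    rw [Real.dist_eq]
    exact Real.sqrt_le_sqrt_add_mul_abs L.2 (hg x hx) (hg' x hx) (htaylor x hx y hy)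

theorem LipschitzOnWith.union_of_le {E : Type*} [PseudoMetricSpace E] {f : ℝ → E} {K : ℝ≥0}
    {s t : Set ℝ} {b : ℝ} (hs : LipschitzOnWith K f s) (ht : LipschitzOnWith K f t)
    (hbs : b ∈ s) (hbt : b ∈ t) (hsb : ∀ x ∈ s, x ≤ b) (htb : ∀ y ∈ t, b ≤ y) :
    LipschitzOnWith K f (s ∪ t) := by
  have across : ∀ x ∈ s, ∀ y ∈ t, dist (f x) (f y) ≤ K * dist x y := fun x hx y hy ↦ by
    have hxb := hsb x hx
    have hby := htb y hy
    calc dist (f x) (f y) ≤ dist (f x) (f b) + dist (f b) (f y) := dist_triangle _ _ _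
      _ ≤ K * dist x b + K * dist b y := add_le_add (hs.dist_le_mul x hx b hbs)
          (ht.dist_le_mul b hbt y hy)
      _ = K * dist x y := by
        simp only [Real.dist_eq, abs_of_nonpos (sub_nonpos.2 hxb),
          abs_of_nonpos (sub_nonpos.2 hby), abs_of_nonpos (sub_nonpos.2 (hxb.trans hby))]
        ring
  refine LipschitzOnWith.of_dist_le_mul fun x hx y hy ↦ ?_
  rcases hx with hx | hx <;> rcases hy with hy | hy
  · exact hs.dist_le_mul x hx y hy
  · exact across x hx y hy
  · rw [dist_comm, dist_comm x]; exact across y hy x hx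
  · exact ht.dist_le_mul x hx y hy

section FM

variable {M : ℝ}

theorem FM_abs (x : ℝ) : FM M |x| = FM M x := by
  simp only [FM, abs_abs, sq_abs]

theorem FM_of_abs_le {x : ℝ} (hx : |x| ≤ M) : FM M x = ((1 - x ^ 2) / 2) ^ 2 := by
  rw [FM, if_pos hx]; ring

theorem FM_of_le {x : ℝ} (hM : 0 ≤ M) (hx : M ≤ x) :
    FM M x = (1 - M ^ 2) ^ 2 / 4 + (3 * M ^ 2 - 1) * (x ^ 2 - M ^ 2) / 2 - 2 * M ^ 3 * (x - M) := by
  have habs : |x| = x := abs_of_nonneg (hM.trans hx)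
  rcases hx.eq_or_lt with rfl | hlt
  · rw [FM, if_pos habs.le]; ring
  · rw [FM, if_neg (by rw [habs]; exact hlt.not_ge), habs]

theorem FM_taylor_of_le {x y : ℝ} (hM : 0 ≤ M) (hx : M ≤ x) (hy : M ≤ y) :
    FM M y = FM M x + ((3 * M ^ 2 - 1) * x - 2 * M ^ 3) * (y - x)
      + (3 * M ^ 2 - 1) / 2 * (y - x) ^ 2 := by
  rw [FM_of_le hM hx, FM_of_le hM hy]; ring

theorem sq_deriv_FM_le {x : ℝ} (hM : 1 ≤ M) (hx : M ≤ x) :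
    ((3 * M ^ 2 - 1) * x - 2 * M ^ 3) ^ 2 ≤ 16 * M ^ 2 * FM M x := by
  have hM2 : 0 ≤ M ^ 2 - 1 := by nlinarith
  have expand : 16 * M ^ 2 * FM M x - ((3 * M ^ 2 - 1) * x - 2 * M ^ 3) ^ 2 =
      (5 * M ^ 2 + 1) * (3 * M ^ 2 - 1) * (x - M) ^ 2
        + 2 * M * (M ^ 2 - 1) * (5 * M ^ 2 + 1) * (x - M) + 3 * M ^ 2 * (M ^ 2 - 1) ^ 2 := by
    rw [FM_of_le (by linarith) hx]; ring
  have : 0 ≤ 2 * M * (M ^ 2 - 1) * (5 * M ^ 2 + 1) * (x - M) := by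
    have := sub_nonneg.2 hx
    positivity
  nlinarith [sq_nonneg (x - M)]

theorem FM_nonneg (hM : 1 ≤ M) (x : ℝ) : 0 ≤ FM M x := by
  rcases le_or_gt |x| M with hx | hx
  · rw [FM_of_abs_le hx]; positivity
  · rw [← FM_abs]
    exact nonneg_of_mul_nonneg_right ((sq_nonneg _).trans (sq_deriv_FM_le hM hx.le))
      (by positivity)

theorem lipschitzOnWith_sqrt_FM_Icc :
    LipschitzOnWith M.toNNReal (fun x ↦ √(FM M x)) (Icc (-M) M) := by
  refine LipschitzOnWith.of_dist_le' fun x hx y hy ↦ ?_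
  rw [FM_of_abs_le (abs_le.2 hx), FM_of_abs_le (abs_le.2 hy), Real.sqrt_sq_eq_abs,
    Real.sqrt_sq_eq_abs, Real.dist_eq, Real.dist_eq]
  have hxy : |x + y| ≤ 2 * M := by rw [abs_le]; constructor <;> linarith [hx.1, hx.2, hy.1, hy.2]
  calc |(|(1 - x ^ 2) / 2| - |(1 - y ^ 2) / 2|)| ≤ |(1 - x ^ 2) / 2 - (1 - y ^ 2) / 2| :=
        abs_abs_sub_abs_le_abs_sub _ _
    _ = |x - y| * |x + y| / 2 := by
        rw [← abs_mul, show (1 - x ^ 2) / 2 - (1 - y ^ 2) / 2 = -((x - y) * (x + y)) / 2 by ring,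
          abs_div, abs_neg, abs_two]
    _ ≤ M * |x - y| := by nlinarith [abs_nonneg (x - y)]

theorem lipschitzOnWith_sqrt_FM_Ici (hM : 1 ≤ M) :
    LipschitzOnWith (2 * M).toNNReal (fun x ↦ √(FM M x)) (Ici M) := by
  have hM0 : 0 ≤ M := by linarith
  have hL : ((2 * M).toNNReal : ℝ) = 2 * M := Real.coe_toNNReal _ (by linarith)
  refine LipschitzOnWith.sqrt_of_le_taylor (g' := fun x ↦ (3 * M ^ 2 - 1) * x - 2 * M ^ 3)
    (fun x _ ↦ FM_nonneg hM x) (fun x hx ↦ ?_) (fun x hx y hy ↦ ?_)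
  · rw [hL]
    linear_combination sq_deriv_FM_le hM hx
  · rw [FM_taylor_of_le hM0 hx hy, hL]
    have : (3 * M ^ 2 - 1) / 2 ≤ (2 * M) ^ 2 := by nlinarith
    gcongr

theorem lipschitzWith_sqrt_FM (hM : 1 ≤ M) :
    LipschitzWith (2 * M).toNNReal (fun x ↦ √(FM M x)) := by
  have hM0 : 0 ≤ M := by linarith
  have inner : LipschitzOnWith (2 * M).toNNReal (fun x ↦ √(FM M x)) (Icc 0 M) :=
    (lipschitzOnWith_sqrt_FM_Icc.mono (Icc_subset_Icc_left (by linarith))).weaken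
      (Real.toNNReal_le_toNNReal (by linarith))
  have halfLine : LipschitzOnWith (2 * M).toNNReal (fun x ↦ √(FM M x)) (Ici 0) := by
    rw [← Icc_union_Ici_eq_Ici hM0]
    exact inner.union_of_le (lipschitzOnWith_sqrt_FM_Ici hM) ⟨hM0, le_rfl⟩ self_mem_Ici
      (fun x hx ↦ hx.2) (fun y hy ↦ hy)
  refine LipschitzWith.of_dist_le_mul fun x y ↦ ?_
  rw [← FM_abs x, ← FM_abs y]
  calc dist √(FM M |x|) √(FM M |y|) ≤ (2 * M).toNNReal * dist |x| |y| :=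
        halfLine.dist_le_mul _ (abs_nonneg x) _ (abs_nonneg y)
    _ ≤ (2 * M).toNNReal * dist x y := by
        gcongr; exact abs_abs_sub_abs_le_abs_sub x y

end FM

/-- `F_M` is nonnegative and `x ↦ √(F_M(x))` is `2M`-Lipschitz on `ℝ`. -/
theorem FM_nonneg_sqrt_lipschitz (M : ℝ) (hM : 1 ≤ M) :
    (∀ x : ℝ, 0 ≤ FM M x) ∧
    (∀ x y : ℝ, |Real.sqrt (FM M x) - Real.sqrt (FM M y)| ≤ 2 * M * |x - y|) := by
  refine ⟨FM_nonneg hM, fun x y ↦ ?_⟩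
  have h := (lipschitzWith_sqrt_FM hM).dist_le_mul x y
  rwa [Real.dist_eq, Real.dist_eq, Real.coe_toNNReal _ (by linarith)] at h
end

section
/- If u : ℝ → ℝ is twice continuously differentiable and satisfies u''(ξ) = u(ξ)³ − u(ξ) for all ξ ∈ ℝ, u(0) = 0, lim_{ξ→+∞} u(ξ) = 1, and lim_{ξ→−∞} u(ξ) = −1, then u(ξ) = tanh(ξ/√2) for every ξ ∈ ℝ; i.e., the connecting-orbit boundary value problem for the profile equation has the unique solution tanh(ξ/√2). -/
/-!
Multiplying the equation by `u'` shows that the energy `u'² / 2 - (u² - 1)² / 4` is constant;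
it vanishes because `u → 1` and `u' → 0` at `+∞` (the latter since `u` converges and `u''` is
bounded). On this level set `|u'| ≤ C |u ∓ 1|`, so by Grönwall `u` cannot reach `±1` without being
constant, contradicting `u 0 = 0`. Hence `|u| < 1`, `u'` never vanishes, and its sign is fixed by
`u → 1`: `u' = (1 - u²) / √2`. This first-order equation is also solved by `tanh (ξ / √2)`, and its
right-hand side is Lipschitz on `[-1, 1]`, so Grönwall once more gives `u = tanh (· / √2)`.
-/

open Filter Set Topology

lemma exists_forall_abs_le_of_tendsto {f : ℝ → ℝ} {a b : ℝ} (hf : Continuous f)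
    (htop : Tendsto f atTop (𝓝 a)) (hbot : Tendsto f atBot (𝓝 b)) : ∃ C, ∀ x, |f x| ≤ C := by
  obtain ⟨C, hC⟩ := isBounded_iff_forall_norm_le.mp
    (hf.isBounded_range_iff_isBigO_atTop_atBot.mpr ⟨htop.isBigO_one ℝ, hbot.isBigO_one ℝ⟩)
  exact ⟨C, fun x => hC _ (mem_range_self x)⟩

lemma forall_pos_or_forall_neg_of_ne_zero {g : ℝ → ℝ} (hg : Continuous g) (h : ∀ x, g x ≠ 0) :
    (∀ x, 0 < g x) ∨ ∀ x, g x < 0 := by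
  have no_zero_between (x y : ℝ) : 0 ∉ Icc (g x) (g y) := fun h0 => by
    obtain ⟨z, hz⟩ := intermediate_value_univ x y hg h0
    exact h z hz
  rcases (h 0).lt_or_gt with hneg | hpos
  · exact .inr fun x => not_le.mp fun hx => no_zero_between 0 x ⟨hneg.le, hx⟩
  · exact .inl fun x => not_le.mp fun hx => no_zero_between x 0 ⟨hx, hpos.le⟩

lemma abs_deriv_sub_slope_le {f f' f'' : ℝ → ℝ} {M : ℝ} (hf : ∀ x, HasDerivAt f (f' x) x)
    (hf' : ∀ x, HasDerivAt f' (f'' x) x) (hM : ∀ x, |f'' x| ≤ M) (x : ℝ) {h : ℝ} (hh : 0 < h) :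
    |f' x - (f (x + h) - f x) / h| ≤ M * h := by
  obtain ⟨c, hc, hslope⟩ := exists_hasDerivAt_eq_slope f f' (lt_add_of_pos_right x hh)
    (fun y _ => (hf y).continuousAt.continuousWithinAt) (fun y _ => hf y)
  rw [add_sub_cancel_left] at hslope
  rw [← hslope]
  have := convex_univ.norm_image_sub_le_of_norm_hasDerivWithin_le
    (fun y _ => (hf' y).hasDerivWithinAt) (fun y _ => hM y) (mem_univ c) (mem_univ x)
  simp only [Real.norm_eq_abs] at this
  calc |f' x - f' c| ≤ M * |x - c| := this
    _ ≤ M * h := by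
      gcongr
      · exact (abs_nonneg _).trans (hM 0)
      · rw [abs_sub_comm, abs_of_pos (by linarith [hc.1])]
        linarith [hc.2]

lemma tendsto_deriv_atTop_zero_of_tendsto {f f' f'' : ℝ → ℝ} {M L : ℝ}
    (hf : ∀ x, HasDerivAt f (f' x) x) (hf' : ∀ x, HasDerivAt f' (f'' x) x) (hM : ∀ x, |f'' x| ≤ M)
    (hlim : Tendsto f atTop (𝓝 L)) : Tendsto f' atTop (𝓝 0) := by
  rw [Metric.tendsto_atTop]
  intro ε hε
  have hM0 : 0 ≤ M := (abs_nonneg _).trans (hM 0)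
  set h := ε / (2 * (M + 1)) with h_def
  have hh : 0 < h := by positivity
  have hMh : M * h ≤ ε / 2 := by
    rw [h_def, mul_div_assoc', div_le_div_iff₀ (by positivity) (by norm_num)]
    nlinarith
  have hslope : Tendsto (fun x => (f (x + h) - f x) / h) atTop (𝓝 0) := by
    simpa using ((hlim.comp (tendsto_atTop_add_const_right _ h tendsto_id)).sub hlim).div_const h
  obtain ⟨N, hN⟩ := Metric.tendsto_atTop.mp hslope (ε / 2) (half_pos hε)
  refine ⟨N, fun x hx => ?_⟩
  have hclose := abs_deriv_sub_slope_le hf hf' hM x hh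
  have hsmall := hN x hx
  rw [Real.dist_eq, sub_zero] at hsmall ⊢
  linarith [abs_sub_abs_le_abs_sub (f' x) ((f (x + h) - f x) / h)]

lemma eq_zero_of_abs_deriv_le_mul_abs_of_le {f f' : ℝ → ℝ} {K a b : ℝ}
    (hf : ∀ t, HasDerivAt f (f' t) t) (hK : ∀ t, |f' t| ≤ K * |f t|) (ha : f a = 0)
    (hab : a ≤ b) : f b = 0 := by
  have hbound := norm_le_gronwallBound_of_norm_deriv_right_le (δ := 0) (ε := 0)
    (fun t _ => (hf t).continuousAt.continuousWithinAt) (fun t _ => (hf t).hasDerivWithinAt)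
    (by simp [ha]) (fun t _ => by simpa only [Real.norm_eq_abs, add_zero] using hK t)
    b ⟨hab, le_rfl⟩
  rw [gronwallBound_ε0_δ0] at hbound
  exact norm_le_zero_iff.mp hbound

lemma eq_zero_of_abs_deriv_le_mul_abs {f f' : ℝ → ℝ} {K a : ℝ}
    (hf : ∀ t, HasDerivAt f (f' t) t) (hK : ∀ t, |f' t| ≤ K * |f t|) (ha : f a = 0)
    (t : ℝ) : f t = 0 := by
  rcases le_total a t with hat | hta
  · exact eq_zero_of_abs_deriv_le_mul_abs_of_le hf hK ha hat
  · have hrefl (s : ℝ) : HasDerivAt (fun s => f (-s)) (f' (-s) * -1) s :=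
      (hf (-s)).comp s (hasDerivAt_neg s)
    simpa using eq_zero_of_abs_deriv_le_mul_abs_of_le hrefl (fun s => by simpa using hK (-s))
      (by simpa using ha) (neg_le_neg hta)

lemma energy_eq_of_hasDerivAt {u u' V V' : ℝ → ℝ} (hu : ∀ x, HasDerivAt u (u' x) x)
    (hu' : ∀ x, HasDerivAt u' (V' (u x)) x) (hV : ∀ y, HasDerivAt V (V' y) y) (x y : ℝ) :
    u' x ^ 2 / 2 - V (u x) = u' y ^ 2 / 2 - V (u y) := by
  have hE (x : ℝ) : HasDerivAt (fun x => u' x ^ 2 / 2 - V (u x)) 0 x :=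
    ((((hu' x).pow 2).div_const 2).sub ((hV (u x)).comp x (hu x))).congr_deriv (by ring)
  exact is_const_of_deriv_eq_zero (fun x => (hE x).differentiableAt) (fun x => (hE x).deriv) x y

lemma Real.hasDerivAt_tanh (x : ℝ) : HasDerivAt Real.tanh (1 - Real.tanh x ^ 2) x := by
  have hcosh := (Real.cosh_pos x).ne'
  have h := (Real.hasDerivAt_sinh x).div (Real.hasDerivAt_cosh x) hcosh
  rw [show Real.tanh = Real.sinh / Real.cosh from funext Real.tanh_eq_sinh_div_cosh]
  refine h.congr_deriv ?_
  simp only [Pi.div_apply]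
  field_simp

lemma sq_deriv_eq_of_tendsto {u u' : ℝ → ℝ} (hu : ∀ x, HasDerivAt u (u' x) x)
    (hu' : ∀ x, HasDerivAt u' (u x ^ 3 - u x) x) (htop : Tendsto u atTop (𝓝 1))
    (htop' : Tendsto u' atTop (𝓝 0)) (x : ℝ) : u' x ^ 2 = (1 - u x ^ 2) ^ 2 / 2 := by
  set E : ℝ → ℝ := fun x => u' x ^ 2 / 2 - (u x ^ 2 - 1) ^ 2 / 4
  have hV (y : ℝ) : HasDerivAt (fun y => (y ^ 2 - 1) ^ 2 / 4) (y ^ 3 - y) y :=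
    ((((hasDerivAt_id y).pow 2).sub_const 1).pow 2).div_const 4 |>.congr_deriv
      (by simp only [Pi.pow_apply, id]; ring)
  have hE (y : ℝ) : E x = E y := energy_eq_of_hasDerivAt hu hu' hV x y
  have hlim : Tendsto E atTop (𝓝 0) := by
    simpa using ((htop'.pow 2).div_const 2).sub ((((htop.pow 2).sub_const 1).pow 2).div_const 4)
  have hEx : E x = 0 :=
    tendsto_nhds_unique (tendsto_const_nhds.congr hE) hlim
  simp only [E] at hEx
  linarith

lemma eq_of_sq_deriv_eq_of_sq_eq_one {u u' : ℝ → ℝ} {B a e : ℝ}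
    (hu : ∀ x, HasDerivAt u (u' x) x) (hsq : ∀ x, u' x ^ 2 = (1 - u x ^ 2) ^ 2 / 2)
    (hB : ∀ x, |u x| ≤ B) (he : e ^ 2 = 1) (ha : u a = e) (x : ℝ) : u x = e := by
  have hlip (t : ℝ) : |u' t| ≤ (B + 1) * |u t - e| := by
    have hsum : |u t + e| ≤ B + 1 := by
      have : |e| = 1 := by simpa using (sq_eq_sq_iff_abs_eq_abs e 1).mp (by simp [he])
      linarith [abs_add_le (u t) e, hB t]
    refine abs_le_of_sq_le_sq ?_ (mul_nonneg ((abs_nonneg _).trans hsum) (abs_nonneg _))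
    calc u' t ^ 2 = (u t - e) ^ 2 * (u t + e) ^ 2 / 2 := by rw [hsq t, ← he]; ring
      _ ≤ (u t - e) ^ 2 * (u t + e) ^ 2 := by nlinarith [sq_nonneg ((u t - e) * (u t + e))]
      _ ≤ (u t - e) ^ 2 * (B + 1) ^ 2 :=
        mul_le_mul_of_nonneg_left (sq_le_sq' (abs_le.mp hsum).1 (abs_le.mp hsum).2) (sq_nonneg _)
      _ = ((B + 1) * |u t - e|) ^ 2 := by rw [mul_pow, sq_abs, mul_comm]
  have := eq_zero_of_abs_deriv_le_mul_abs (fun t => (hu t).sub_const e) hlip (sub_eq_zero.mpr ha) x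
  linarith

lemma abs_lt_one_of_sq_deriv_eq {u u' : ℝ → ℝ} {B : ℝ} (hu : ∀ x, HasDerivAt u (u' x) x)
    (hsq : ∀ x, u' x ^ 2 = (1 - u x ^ 2) ^ 2 / 2) (hB : ∀ x, |u x| ≤ B) (h0 : u 0 = 0) (x : ℝ) :
    |u x| < 1 := by
  have hc : Continuous u := continuous_iff_continuousAt.mpr fun x => (hu x).continuousAt
  have hne (a : ℝ) (ha : u a ^ 2 = 1) : False := by
    have := eq_of_sq_deriv_eq_of_sq_eq_one hu hsq hB ha rfl 0
    rw [h0] at this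
    simp [← this] at ha
  by_contra! hx
  rcases le_abs'.mp hx with hneg | hpos
  · obtain ⟨a, ha⟩ := intermediate_value_univ x 0 hc (show -1 ∈ Icc (u x) (u 0) by
      rw [h0]; constructor <;> linarith)
    exact hne a (by rw [ha]; norm_num)
  · obtain ⟨a, ha⟩ := intermediate_value_univ 0 x hc (show 1 ∈ Icc (u 0) (u x) by
      rw [h0]; constructor <;> linarith)
    exact hne a (by rw [ha]; norm_num)

lemma deriv_eq_of_sq_deriv_eq {u u' : ℝ → ℝ} (hu : ∀ x, HasDerivAt u (u' x) x)
    (hu' : Continuous u') (hsq : ∀ x, u' x ^ 2 = (1 - u x ^ 2) ^ 2 / 2)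
    (hlt : ∀ x, |u x| < 1) (h0 : u 0 = 0) (htop : Tendsto u atTop (𝓝 1)) (x : ℝ) :
    u' x = (1 - u x ^ 2) / √2 := by
  have hgap (x : ℝ) : 0 < 1 - u x ^ 2 := by
    nlinarith [(sq_lt_one_iff_abs_lt_one (u x)).mpr (hlt x)]
  have hne (x : ℝ) : u' x ≠ 0 := fun h => by
    have := hsq x
    rw [h] at this
    nlinarith [hgap x]
  rcases forall_pos_or_forall_neg_of_ne_zero hu' hne with hpos | hneg
  · refine (sq_eq_sq₀ (hpos x).le (by have := hgap x; positivity)).mp ?_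
    rw [hsq x, div_pow, Real.sq_sqrt zero_le_two]
  · have hanti : StrictAnti u := strictAnti_of_deriv_neg fun x => (hu x).deriv ▸ hneg x
    obtain ⟨y, hy, hy0⟩ := ((htop.eventually (lt_mem_nhds zero_lt_one)).and
      (eventually_gt_atTop 0)).exists
    linarith [hanti hy0]

lemma eq_tanh_of_hasDerivAt {u : ℝ → ℝ} (hu : ∀ x, HasDerivAt u ((1 - u x ^ 2) / √2) x)
    (hle : ∀ x, |u x| ≤ 1) (h0 : u 0 = 0) (x : ℝ) : u x = Real.tanh (x / √2) := by
  set g : ℝ → ℝ := fun x => Real.tanh (x / √2)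
  have hg (x : ℝ) : HasDerivAt g ((1 - g x ^ 2) / √2) x := by
    have := (Real.hasDerivAt_tanh (x / √2)).comp x ((hasDerivAt_id x).div_const √2)
    exact this.congr_deriv (by ring)
  have hlip (t : ℝ) : |(1 - u t ^ 2) / √2 - (1 - g t ^ 2) / √2| ≤ 2 * |u t - g t| := by
    have hsum : |g t + u t| ≤ 2 := by
      linarith [abs_add_le (g t) (u t), hle t, (Real.abs_tanh_lt_one (t / √2)).le]
    calc |(1 - u t ^ 2) / √2 - (1 - g t ^ 2) / √2| = |(g t + u t) * (g t - u t) / √2| := by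
          congr 1; ring
      _ = |g t + u t| * |u t - g t| / √2 := by
          rw [abs_div, abs_mul, abs_sub_comm (g t), abs_of_pos (Real.sqrt_pos.mpr zero_lt_two)]
      _ ≤ |g t + u t| * |u t - g t| :=
          div_le_self (by positivity) (Real.one_le_sqrt.mpr one_le_two)
      _ ≤ 2 * |u t - g t| := by gcongr
  have := eq_zero_of_abs_deriv_le_mul_abs (fun t => (hu t).sub (hg t)) hlip
    (show u 0 - g 0 = 0 by simp [g, h0]) x
  exact sub_eq_zero.mp this

/-- Uniqueness of the connecting orbit for the profile equation `u'' = u³ − u`: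
any `C²` solution with `u(0) = 0`, `u → 1` at `+∞` and `u → −1` at `−∞` is
the transition profile `tanh(ξ/√2)`. -/
theorem profile_uniqueness (u : ℝ → ℝ)
    (hu : ContDiff ℝ 2 u)
    (hode : ∀ ξ : ℝ, deriv (deriv u) ξ = u ξ ^ 3 - u ξ)
    (h0 : u 0 = 0)
    (htop : Tendsto u atTop (nhds 1))
    (hbot : Tendsto u atBot (nhds (-1))) :
    ∀ ξ : ℝ, u ξ = Real.tanh (ξ / Real.sqrt 2) := by
  have hu' : ContDiff ℝ 1 (deriv u) := ContDiff.deriv' (n := 1) hu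
  have hd1 (x : ℝ) : HasDerivAt u (deriv u x) x :=
    (hu.differentiable (by norm_num) x).hasDerivAt
  have hd2 (x : ℝ) : HasDerivAt (deriv u) (u x ^ 3 - u x) x :=
    hode x ▸ (hu'.differentiable one_ne_zero x).hasDerivAt
  obtain ⟨B, hB⟩ := exists_forall_abs_le_of_tendsto hu.continuous htop hbot
  have hd2_le (x : ℝ) : |u x ^ 3 - u x| ≤ B ^ 3 + B := by
    have hu3 : |u x| ^ 3 ≤ B ^ 3 := pow_le_pow_left₀ (abs_nonneg _) (hB x) 3
    calc |u x ^ 3 - u x| ≤ |u x| ^ 3 + |u x| := by rw [← abs_pow]; exact abs_sub _ _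
      _ ≤ B ^ 3 + B := add_le_add hu3 (hB x)
  have hsq := sq_deriv_eq_of_tendsto hd1 hd2 htop
    (tendsto_deriv_atTop_zero_of_tendsto hd1 hd2 hd2_le htop)
  have hlt := abs_lt_one_of_sq_deriv_eq hd1 hsq hB h0
  have hfirst := deriv_eq_of_sq_deriv_eq hd1 hu'.continuous hsq hlt h0 htop
  exact eq_tanh_of_hasDerivAt (fun x => hfirst x ▸ hd1 x) (fun x => (hlt x).le) h0
end
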